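/- arXiv:math/9809028 — 5 statements merged into one kernel-verified Lean document; each statement's English description precedes it below -/
import Mathlib

section
/- Let λ ∈ ℝ and let p, v, a : I → ℝ³ be differentiable functions on an interval I containing 0, with v(t) ≠ 0 for all t ∈ I, satisfying the ODE system p' = v, v' = a, a' = −(‖a‖²/‖v‖²)v − λ·P(v)a on I. Then ⟨v(t), a(t)⟩ = ⟨v(0), a(0)⟩ for all t ∈ I; in particular, if ⟨v(0), a(0)⟩ = 0, then ⟨v(t), a(t)⟩ = 0 and ‖v(t)‖ = ‖v(0)‖ for all t ∈ I. -/
open scoped RealInnerProductSpace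

/-- For nonzero `v ∈ ℝ³`, `P v = I - v vᵀ / ‖v‖²`. -/
noncomputable def projMat (v : EuclideanSpace ℝ (Fin 3)) : Matrix (Fin 3) (Fin 3) ℝ :=
  1 - (‖v‖ ^ 2)⁻¹ • Matrix.vecMulVec v v

lemma projMat_inner_zero (v a : EuclideanSpace ℝ (Fin 3)) (hv : v ≠ 0) :
    ⟪v, ((WithLp.equiv 2 (Fin 3 → ℝ)).symm ((projMat v).mulVec a))⟫ = 0 := by
  have hn : ‖v‖ ^ 2 ≠ 0 := pow_ne_zero _ (norm_ne_zero_iff.mpr hv)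
  have hnorm : ‖v‖ ^ 2 = v 0 * v 0 + v 1 * v 1 + v 2 * v 2 := by
    rw [EuclideanSpace.norm_eq, Real.sq_sqrt (by positivity)]
    simp only [Fin.sum_univ_three, Real.norm_eq_abs, sq_abs]; ring
  simp only [PiLp.inner_apply, RCLike.inner_apply, conj_trivial, Fin.sum_univ_three,
    WithLp.equiv_symm_apply, PiLp.toLp_apply, Matrix.mulVec, dotProduct, projMat,
    Matrix.sub_apply, Matrix.one_apply, Matrix.smul_apply, Matrix.vecMulVec_apply,
    smul_eq_mul, Fin.ext_iff]
  norm_num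
  field_simp
  rw [hnorm]
  ring

/-- Constancy of a real function with zero derivative on an ord-connected set. -/
lemma const_of_deriv_zero {I : Set ℝ} (hI : I.OrdConnected) {f : ℝ → ℝ}
    (hf : ∀ t ∈ I, HasDerivWithinAt f 0 I t) {s t : ℝ} (hs : s ∈ I) (ht : t ∈ I) :
    f t = f s := by
  have hconv : Convex ℝ I := convex_iff_ordConnected.mpr hI
  have := hconv.norm_image_sub_le_of_norm_hasDerivWithin_le (f' := fun _ => (0 : ℝ)) (C := 0)
    hf (fun x _ => by simp) hs ht
  rw [zero_mul] at this
  have h0 : ‖f t - f s‖ = 0 := le_antisymm this (norm_nonneg _)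
  rwa [norm_eq_zero, sub_eq_zero] at h0

theorem stmt4 (lam : ℝ) (I : Set ℝ) (hI : I.OrdConnected) (h0 : (0 : ℝ) ∈ I)
    (p v a : ℝ → EuclideanSpace ℝ (Fin 3))
    (hv0 : ∀ t ∈ I, v t ≠ 0)
    (hp : ∀ t ∈ I, HasDerivWithinAt p (v t) I t)
    (hv : ∀ t ∈ I, HasDerivWithinAt v (a t) I t)
    (ha : ∀ t ∈ I, HasDerivWithinAt a
      (-(‖a t‖ ^ 2 / ‖v t‖ ^ 2) • v t
        - lam • (WithLp.equiv 2 (Fin 3 → ℝ)).symm ((projMat (v t)).mulVec (a t))) I t) :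
    (∀ t ∈ I, ⟪v t, a t⟫ = ⟪v 0, a 0⟫) ∧
    (⟪v 0, a 0⟫ = 0 → ∀ t ∈ I, ⟪v t, a t⟫ = 0 ∧ ‖v t‖ = ‖v 0‖) := by
  have hf : ∀ t ∈ I, HasDerivWithinAt (fun t => ⟪v t, a t⟫) 0 I t := by
    intro t ht
    have hd := (hv t ht).inner ℝ (ha t ht)
    convert hd using 1
    · rfl
    · rfl
    have hk := projMat_inner_zero (v t) (a t) (hv0 t ht)
    have hn : ‖v t‖ ^ 2 ≠ 0 := pow_ne_zero _ (norm_ne_zero_iff.mpr (hv0 t ht))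
    rw [inner_sub_right, inner_smul_right, inner_smul_right, hk,
      real_inner_self_eq_norm_sq, real_inner_self_eq_norm_sq]
    field_simp
    rw [mul_div_cancel_right₀ _ (norm_ne_zero_iff.mpr (hv0 t ht))]; ring
  have part1 : ∀ t ∈ I, ⟪v t, a t⟫ = ⟪v 0, a 0⟫ :=
    fun t ht => const_of_deriv_zero hI hf h0 ht
  refine ⟨part1, fun hz t ht => ?_⟩
  have hva : ∀ s ∈ I, ⟪v s, a s⟫ = 0 := fun s hs => (part1 s hs).trans hz
  have hg : ∀ s ∈ I, HasDerivWithinAt (fun t => ⟪v t, v t⟫) 0 I s := by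
    intro s hs
    have hd := (hv s hs).inner ℝ (hv s hs)
    have e : ⟪v s, a s⟫ + ⟪a s, v s⟫ = (0 : ℝ) := by
      rw [real_inner_comm (v s) (a s), hva s hs]; ring
    rwa [e] at hd
  have hvv : ⟪v t, v t⟫ = ⟪v 0, v 0⟫ := const_of_deriv_zero hI hg h0 ht
  rw [real_inner_self_eq_norm_sq, real_inner_self_eq_norm_sq] at hvv
  refine ⟨hva t ht, ?_⟩
  have := congrArg Real.sqrt hvv
  rwa [Real.sqrt_sq (norm_nonneg _), Real.sqrt_sq (norm_nonneg _)] at this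
end

section
/- Let Σ ∈ Mₚ(ℝ) be symmetric positive semidefinite, B ∈ M_q(ℝ) symmetric positive definite, J a real q×p matrix, and let T ∈ GLₚ(ℝ), S ∈ GL_q(ℝ) be invertible matrices. Define the transformed data Σ̃ := TΣTᵀ, B̃ := SBSᵀ, J̃ := SJT⁻¹, and the gains G := ΣJᵀ(JΣJᵀ + B)⁻¹ and G̃ := Σ̃J̃ᵀ(J̃Σ̃J̃ᵀ + B̃)⁻¹. Then G̃ = TGS⁻¹; consequently, for every μ ∈ ℝᵖ and y ∈ ℝ^q, Tμ + G̃(Sy − J̃Tμ) = T(μ + G(y − Jμ)), and (I − G̃J̃)Σ̃ = T((I − GJ)Σ)Tᵀ. -/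
open Matrix

private lemma real_ct {m n : ℕ} (A : Matrix (Fin m) (Fin n) ℝ) : Aᴴ = Aᵀ := by
  ext i j; simp

theorem stmt11 (p q : ℕ)
    (S : Matrix (Fin p) (Fin p) ℝ) (hS : S.PosSemidef)
    (B : Matrix (Fin q) (Fin q) ℝ) (hB : B.PosDef)
    (J : Matrix (Fin q) (Fin p) ℝ)
    (T : Matrix (Fin p) (Fin p) ℝ) (hT : IsUnit T.det)
    (Sm : Matrix (Fin q) (Fin q) ℝ) (hSm : IsUnit Sm.det) :
    let St : Matrix (Fin p) (Fin p) ℝ := T * S * Tᵀ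
    let Bt : Matrix (Fin q) (Fin q) ℝ := Sm * B * Smᵀ
    let Jt : Matrix (Fin q) (Fin p) ℝ := Sm * J * T⁻¹
    let G : Matrix (Fin p) (Fin q) ℝ := S * Jᵀ * (J * S * Jᵀ + B)⁻¹
    let Gt : Matrix (Fin p) (Fin q) ℝ := St * Jtᵀ * (Jt * St * Jtᵀ + Bt)⁻¹
    Gt = T * G * Sm⁻¹ ∧
    (∀ (μ : Fin p → ℝ) (y : Fin q → ℝ),
      T.mulVec μ + Gt.mulVec (Sm.mulVec y - Jt.mulVec (T.mulVec μ)) =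
        T.mulVec (μ + G.mulVec (y - J.mulVec μ))) ∧
    (1 - Gt * Jt) * St = T * ((1 - G * J) * S) * Tᵀ := by
  intro St Bt Jt G Gt
  have hTT : T⁻¹ * T = 1 := nonsing_inv_mul T hT
  have hSS : Sm⁻¹ * Sm = 1 := nonsing_inv_mul Sm hSm
  have hTTt : Tᵀ * T⁻¹ᵀ = 1 := by rw [← transpose_mul, hTT, transpose_one]
  have hSSt : Smᵀ * Sm⁻¹ᵀ = 1 := by rw [← transpose_mul, hSS, transpose_one]
  have hJSJ : (J * S * Jᵀ).PosSemidef := by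
    have := hS.mul_mul_conjTranspose_same J
    rwa [real_ct] at this
  have hM : (J * S * Jᵀ + B).PosDef := Matrix.PosDef.posSemidef_add hJSJ hB
  have hMu : IsUnit (J * S * Jᵀ + B).det := isUnit_iff_isUnit_det _ |>.1 hM.isUnit
  have hmid : Jt * St * Jtᵀ + Bt = Sm * (J * S * Jᵀ + B) * Smᵀ := by
    show Sm * J * T⁻¹ * (T * S * Tᵀ) * (Sm * J * T⁻¹)ᵀ + Sm * B * Smᵀ
        = Sm * (J * S * Jᵀ + B) * Smᵀ
    rw [transpose_mul, transpose_mul, Matrix.mul_add, Matrix.add_mul]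
    congr 1
    simp only [Matrix.mul_assoc]
    rw [← Matrix.mul_assoc T⁻¹ T, hTT, Matrix.one_mul,
      ← Matrix.mul_assoc Tᵀ T⁻¹ᵀ, hTTt, Matrix.one_mul]
  have hmidinv : (Jt * St * Jtᵀ + Bt)⁻¹ = Smᵀ⁻¹ * (J * S * Jᵀ + B)⁻¹ * Sm⁻¹ := by
    rw [hmid, Matrix.mul_inv_rev, Matrix.mul_inv_rev]
    simp only [Matrix.mul_assoc]
  have hG : Gt = T * G * Sm⁻¹ := by
    show St * Jtᵀ * (Jt * St * Jtᵀ + Bt)⁻¹ = T * (S * Jᵀ * (J * S * Jᵀ + B)⁻¹) * Sm⁻¹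
    rw [hmidinv]
    show T * S * Tᵀ * (Sm * J * T⁻¹)ᵀ * (Smᵀ⁻¹ * (J * S * Jᵀ + B)⁻¹ * Sm⁻¹) = _
    have hSmt : Smᵀ * Smᵀ⁻¹ = 1 := mul_nonsing_inv Smᵀ (by rwa [det_transpose])
    rw [transpose_mul, transpose_mul]
    simp only [Matrix.mul_assoc]
    rw [← Matrix.mul_assoc Tᵀ T⁻¹ᵀ, hTTt, Matrix.one_mul,
      ← Matrix.mul_assoc Smᵀ Smᵀ⁻¹, hSmt, Matrix.one_mul]
  refine ⟨hG, ?_, ?_⟩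
  · intro μ y
    have h1 : Jt.mulVec (T.mulVec μ) = Sm.mulVec (J.mulVec μ) := by
      show (Sm * J * T⁻¹).mulVec (T.mulVec μ) = _
      rw [mulVec_mulVec, Matrix.mul_assoc (Sm * J), hTT, Matrix.mul_one,
        ← mulVec_mulVec]
    have key : Gt.mulVec (Sm.mulVec y - Jt.mulVec (T.mulVec μ))
        = T.mulVec (G.mulVec (y - J.mulVec μ)) := by
      rw [hG, h1, ← mulVec_sub, mulVec_mulVec, mulVec_mulVec,
        Matrix.mul_assoc (T * G), hSS, Matrix.mul_one, ← mulVec_mulVec]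
    rw [key, mulVec_add]
  · show (1 - Gt * Jt) * St = _
    rw [hG]
    show (1 - T * G * Sm⁻¹ * (Sm * J * T⁻¹)) * (T * S * Tᵀ) = T * ((1 - G * J) * S) * Tᵀ
    have h2 : T * G * Sm⁻¹ * (Sm * J * T⁻¹) = T * (G * (J * T⁻¹)) := by
      simp only [Matrix.mul_assoc]
      rw [← Matrix.mul_assoc Sm⁻¹ Sm, hSS, Matrix.one_mul]
    rw [h2, Matrix.sub_mul, Matrix.sub_mul, Matrix.mul_sub, Matrix.sub_mul,
      Matrix.one_mul, Matrix.one_mul]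
    congr 1
    simp only [Matrix.mul_assoc]
    rw [← Matrix.mul_assoc T⁻¹ T, hTT, Matrix.one_mul]
end

section
/- Fix x₀ ∈ ℝ, x₀ ≠ 0, real numbers α, Σ₀, and δ > 0. Define x_t := x₀(1 + x₀²t)^{−1/2} for t ∈ [0, δ], τₛᵗ := (x_t/x_s)³, Ξ_t := (τ₀ᵗ)²Σ₀ + α∫₀ᵗ (τₛᵗ)² ds, and m_δ := −(3/2)∫₀^δ τₜ^δ · x_t · Ξ_t dt. Then m_δ = −(3/2)·{ α/(12x_δ³) + x₀⁻⁴(Σ₀ − α/(3x₀²))x_δ³ − x₀⁻⁶(Σ₀ − α/(4x₀²))x_δ⁵ }, where x_δ = x₀(1 + x₀²δ)^{−1/2}. -/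
theorem stmt13 (x₀ : ℝ) (hx₀ : x₀ ≠ 0) (α S₀ δ : ℝ) (hδ : 0 < δ) :
    let x : ℝ → ℝ := fun t => x₀ * (1 + x₀ ^ 2 * t) ^ (-(1 : ℝ) / 2)
    let τ : ℝ → ℝ → ℝ := fun s t => (x t / x s) ^ 3
    let Ξ : ℝ → ℝ := fun t => (τ 0 t) ^ 2 * S₀ + α * ∫ s in (0:ℝ)..t, (τ s t) ^ 2
    let m : ℝ := -(3 / 2) * ∫ t in (0:ℝ)..δ, τ t δ * x t * Ξ t
    m = -(3 / 2) * (α / (12 * (x δ) ^ 3)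
          + (x₀ ^ 4)⁻¹ * (S₀ - α / (3 * x₀ ^ 2)) * (x δ) ^ 3
          - (x₀ ^ 6)⁻¹ * (S₀ - α / (4 * x₀ ^ 2)) * (x δ) ^ 5) := by
  intro x τ Ξ m
  have hc : (0:ℝ) < x₀ ^ 2 := by positivity
  set c := x₀ ^ 2 with hcdef
  have hcne : c ≠ 0 := hc.ne'
  have hu : ∀ t : ℝ, 0 ≤ t → 0 < 1 + c * t := by
    intro t ht; nlinarith
  have hx : ∀ t : ℝ, 0 ≤ t → x t = x₀ / Real.sqrt (1 + c * t) := by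
    intro t ht
    show x₀ * (1 + c * t) ^ (-(1:ℝ)/2) = _
    rw [show (-(1:ℝ)/2) = -(1/2 : ℝ) by ring, Real.rpow_neg (hu t ht).le,
      ← Real.sqrt_eq_rpow, div_eq_mul_inv]
  have hv : ∀ t : ℝ, 0 ≤ t → 0 < Real.sqrt (1 + c * t) :=
    fun t ht => Real.sqrt_pos.mpr (hu t ht)
  have hvsq : ∀ t : ℝ, 0 ≤ t → Real.sqrt (1 + c * t) ^ 2 = 1 + c * t :=
    fun t ht => Real.sq_sqrt (hu t ht).le
  have hτ : ∀ s t : ℝ, 0 ≤ s → 0 ≤ t →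
      τ s t = (Real.sqrt (1 + c * s) / Real.sqrt (1 + c * t)) ^ 3 := by
    intro s t hs ht
    show (x t / x s) ^ 3 = _
    rw [hx t ht, hx s hs]
    congr 1
    field_simp
  have hτ2 : ∀ s t : ℝ, 0 ≤ s → 0 ≤ t →
      (τ s t) ^ 2 = (1 + c * s) ^ 3 / (1 + c * t) ^ 3 := by
    intro s t hs ht
    rw [hτ s t hs ht, ← pow_mul, show 3 * 2 = 2 * 3 from rfl, pow_mul,
      div_pow, hvsq s hs, hvsq t ht, div_pow]
  have hinner : ∀ t : ℝ, (∫ s in (0:ℝ)..t, (1 + c * s) ^ 3)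
      = ((1 + c * t) ^ 4 - 1) / (4 * c) := by
    intro t
    have hd : ∀ s : ℝ, HasDerivAt (fun s : ℝ => (1 + c * s) ^ 4 / (4 * c))
        ((1 + c * s) ^ 3) s := by
      intro s
      have h1 : HasDerivAt (fun s : ℝ => 1 + c * s) c s := by
        simpa using ((hasDerivAt_id s).const_mul c).const_add 1
      have h2 := (h1.pow 4).div_const (4 * c)
      refine h2.congr_deriv ?_
      norm_num
      field_simp
    rw [intervalIntegral.integral_eq_sub_of_hasDerivAt (fun s _ => hd s)
      ((Continuous.intervalIntegrable (by fun_prop) 0 t))]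
    field_simp
    ring
  have hΞ : ∀ t : ℝ, 0 ≤ t →
      Ξ t = (S₀ + α * ((1 + c * t) ^ 4 - 1) / (4 * c)) / (1 + c * t) ^ 3 := by
    intro t ht
    show (τ 0 t) ^ 2 * S₀ + α * ∫ s in (0:ℝ)..t, (τ s t) ^ 2 = _
    have h1 : (τ 0 t) ^ 2 = 1 / (1 + c * t) ^ 3 := by
      rw [hτ2 0 t le_rfl ht]; norm_num
    have h2 : (∫ s in (0:ℝ)..t, (τ s t) ^ 2)
        = ((1 + c * t) ^ 4 - 1) / (4 * c) / (1 + c * t) ^ 3 := by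
      rw [intervalIntegral.integral_congr
        (g := fun s => (1 + c * s) ^ 3 / (1 + c * t) ^ 3) ?_,
        intervalIntegral.integral_div, hinner t]
      intro s hs
      rw [Set.uIcc_of_le ht] at hs
      exact hτ2 s t hs.1 ht
    rw [h1, h2]
    ring
  set A := S₀ - α / (4 * c) with hA
  set B := x₀ / (Real.sqrt (1 + c * δ)) ^ 3 with hB
  have houter : Set.EqOn (fun t => τ t δ * x t * Ξ t)
      (fun t => B * (A * ((1 + c * t) ^ 2)⁻¹ + α / (4 * c) * (1 + c * t) ^ 2))
      (Set.uIcc 0 δ) := by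
    intro t ht
    rw [Set.uIcc_of_le hδ.le] at ht
    have ht0 : 0 ≤ t := ht.1
    simp only
    rw [hτ t δ ht0 hδ.le, hx t ht0, hΞ t ht0, hB, hA]
    have ha2 := hvsq t ht0
    have hb2 := hvsq δ hδ.le
    have hane := (hv t ht0).ne'
    have hbne := (hv δ hδ.le).ne'
    set a := Real.sqrt (1 + c * t) with hadef
    set b := Real.sqrt (1 + c * δ) with hbdef
    clear_value a b
    rw [← ha2]
    field_simp
    ring
  have hint : IntervalIntegrable
      (fun t => B * (A * ((1 + c * t) ^ 2)⁻¹ + α / (4 * c) * (1 + c * t) ^ 2))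
      MeasureTheory.volume 0 δ := by
    apply ContinuousOn.intervalIntegrable
    apply ContinuousOn.mul continuousOn_const
    apply ContinuousOn.add
    · refine ContinuousOn.mul continuousOn_const (ContinuousOn.inv₀ (by fun_prop) ?_)
      intro t ht
      rw [Set.uIcc_of_le hδ.le] at ht
      exact pow_ne_zero _ (hu t ht.1).ne'
    · fun_prop
  have hG : ∀ t ∈ Set.uIcc (0:ℝ) δ,
      HasDerivAt (fun t : ℝ => B * (-(A / c) * (1 + c * t)⁻¹
          + α / (12 * c ^ 2) * (1 + c * t) ^ 3))
        (B * (A * ((1 + c * t) ^ 2)⁻¹ + α / (4 * c) * (1 + c * t) ^ 2)) t := by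
    intro t ht
    rw [Set.uIcc_of_le hδ.le] at ht
    have hne := (hu t ht.1).ne'
    have h1 : HasDerivAt (fun t : ℝ => 1 + c * t) c t := by
      simpa using ((hasDerivAt_id t).const_mul c).const_add 1
    have h2 := (((h1.inv hne).const_mul (-(A / c))).add
      ((h1.pow 3).const_mul (α / (12 * c ^ 2)))).const_mul B
    refine h2.congr_deriv ?_
    norm_num
    field_simp
    ring_nf
    simp
  have houterint : (∫ t in (0:ℝ)..δ, τ t δ * x t * Ξ t)
      = (B * (-(A / c) * (1 + c * δ)⁻¹ + α / (12 * c ^ 2) * (1 + c * δ) ^ 3))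
        - (B * (-(A / c) * (1 + c * 0)⁻¹ + α / (12 * c ^ 2) * (1 + c * 0) ^ 3)) := by
    rw [intervalIntegral.integral_congr houter]
    exact intervalIntegral.integral_eq_sub_of_hasDerivAt hG hint
  show -(3 / 2) * (∫ t in (0:ℝ)..δ, τ t δ * x t * Ξ t) = _
  rw [houterint, hx δ hδ.le, hB, hA]
  have hb2 := hvsq δ hδ.le
  have hbne := (hv δ hδ.le).ne'
  set b := Real.sqrt (1 + c * δ) with hbdef
  clear_value b
  rw [← hb2, hcdef, show (1 + x₀ ^ 2 * 0 : ℝ) = 1 by ring]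
  field_simp
  ring
end

section
/- Let Γ : ℝᵖ → L(ℝᵖ ⊗ ℝᵖ; ℝᵖ) be a C² map assigning to each point a symmetric bilinear map (a local connector). For x ∈ ℝᵖ and v ∈ ℝᵖ, let γ_v : [0,1] → ℝᵖ denote the solution of the geodesic equation γ'' = −Γ(γ)(γ' ⊗ γ') with γ(0) = x, γ'(0) = v. Then there exist constants r > 0 and C > 0 such that for all ‖v‖ < r the solution γ_v exists on [0,1] and ‖γ_v(1) − [x + v − (1/2)Γ(x)(v⊗v) + (1/6)(2Γ(x)(Γ(x)(v⊗v) ⊗ v) − DΓ(x)(v)(v⊗v))]‖ ≤ C‖v‖⁴. -/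
open Set Metric

/-- MVT specialization on `[0,1]`. -/
lemma mvt01 {E : Type*} [NormedAddCommGroup E] [NormedSpace ℝ E]
    (g g' : ℝ → E) (K : ℝ)
    (hd : ∀ s ∈ Icc (0:ℝ) 1, HasDerivAt g (g' s) s)
    (hK : ∀ s ∈ Icc (0:ℝ) 1, ‖g' s‖ ≤ K)
    {t : ℝ} (ht : t ∈ Icc (0:ℝ) 1) : ‖g t - g 0‖ ≤ K * t := by
  have h := Convex.norm_image_sub_le_of_norm_hasDerivWithin_le
    (f := g) (f' := g') (s := Icc (0:ℝ) 1)
    (fun s hs => (hd s hs).hasDerivWithinAt) hK (convex_Icc 0 1)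
    (left_mem_Icc.2 zero_le_one) ht
  simpa [Real.norm_eq_abs, abs_of_nonneg ht.1] using h

/-- Second-order Taylor bound along a segment. -/
lemma taylor2 {E F : Type*} [NormedAddCommGroup E] [NormedSpace ℝ E]
    [NormedAddCommGroup F] [NormedSpace ℝ F]
    (G : E → F) (G' : E → E →L[ℝ] F) (x y : E) (K : ℝ)
    (hd : ∀ z ∈ segment ℝ x y, HasFDerivAt G (G' z) z)
    (hK : ∀ z ∈ segment ℝ x y, ‖G' z - G' x‖ ≤ K) :
    ‖G y - G x - G' x (y - x)‖ ≤ K * ‖y - x‖ := by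
  have h := Convex.norm_image_sub_le_of_norm_hasFDerivWithin_le
    (f := fun z => G z - G' x z) (f' := fun z => G' z - G' x) (s := segment ℝ x y)
    (fun z hz => ((hd z hz).sub (G' x).hasFDerivAt).hasFDerivWithinAt)
    hK (convex_segment x y) (left_mem_segment ℝ x y) (right_mem_segment ℝ x y)
  have e : G y - G' x y - (G x - G' x x) = G y - G x - G' x (y - x) := by
    rw [map_sub]; abel
  rwa [e] at h

/-- Existence of a solution on `[-1,2]` together with an a priori bound on `[0,2]`. -/
lemma exists_sol {E : Type*} [NormedAddCommGroup E] [NormedSpace ℝ E] [CompleteSpace E]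
    [ProperSpace E]
    (F : E → E) (hF : ContDiff ℝ 1 F) (x₀ : E) (Cc : ℝ) (hCc : 0 < Cc)
    (hb : ∀ z ∈ closedBall x₀ 1, ‖F z‖ ≤ Cc) (hCc2 : Cc * 2 ≤ 1/4) :
    ∃ f : ℝ → E, f 0 = x₀ ∧
      (∀ t ∈ Icc (-1:ℝ) 2, HasDerivWithinAt f (F (f t)) (Icc (-1:ℝ) 2) t) ∧
      ∀ t ∈ Icc (0:ℝ) 2, dist (f t) x₀ ≤ 2 * Cc * t := by
  obtain ⟨K, hK⟩ := (isCompact_closedBall x₀ 1).exists_bound_of_continuousOn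
    ((hF.continuous_fderiv one_ne_zero).continuousOn)
  have hK0 : 0 ≤ K := le_trans (norm_nonneg _) (hK x₀ (mem_closedBall_self zero_le_one))
  have hlip : LipschitzOnWith K.toNNReal F (closedBall x₀ 1) := by
    apply Convex.lipschitzOnWith_of_nnnorm_hasFDerivWithin_le
      (f' := fun z => fderiv ℝ F z)
      (fun z _ => ((hF.differentiable one_ne_zero) z).hasFDerivAt.hasFDerivWithinAt)
      (fun z hz => ?_) (convex_closedBall x₀ 1)
    rw [← NNReal.coe_le_coe, coe_nnnorm, Real.coe_toNNReal _ hK0]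
    exact hK z hz
  have hpl : IsPicardLindelof (fun _ z => F z) (tmin := -1) (tmax := 2)
      ⟨0, by constructor <;> norm_num⟩ x₀ 1 0 ⟨Cc, hCc.le⟩ K.toNNReal :=
    { lipschitzOnWith := fun t _ => by simpa using hlip
      continuousOn := fun z _ => continuousOn_const
      norm_le := fun t _ z hz => hb z (by simpa using hz)
      mul_max_le := by
        have : max (2 - 0 : ℝ) (0 - -1) = 2 := by norm_num
        change Cc * _ ≤ _
        norm_num
        linarith }
  obtain ⟨f, hf0, hfd⟩ := hpl.exists_eq_forall_mem_Icc_hasDerivWithinAt₀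
  replace hf0 : f 0 = x₀ := hf0
  refine ⟨f, hf0, hfd, ?_⟩
  set s : Set ℝ := {t : ℝ | ∀ u, 0 ≤ u → u < t → dist (f u) x₀ ≤ 2 * Cc * u} with hs
  have hcont : ContinuousOn f (Icc (-1:ℝ) 2) := fun t ht =>
    (hfd t ht).continuousWithinAt
  have hsclosed : IsClosed s := by
    rw [← isOpen_compl_iff]
    rw [isOpen_iff_mem_nhds]
    intro t ht
    simp only [mem_compl_iff, hs, mem_setOf_eq, not_forall] at ht
    obtain ⟨u, hu0, hut, hbad⟩ := ht
    have : Ioi u ∈ nhds t := Ioi_mem_nhds hut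
    filter_upwards [this] with t' ht'
    simp only [mem_compl_iff, hs, mem_setOf_eq, not_forall]
    exact ⟨u, hu0, ht', hbad⟩
  have hkey : ∀ t ∈ s ∩ Icc (0:ℝ) 2, dist (f t) x₀ ≤ 2 * Cc * t := by
    rintro t ⟨hts, ht0, ht2⟩
    rcases eq_or_lt_of_le ht0 with h | h
    · simp [← h, hf0]
    · have hcl : t ∈ closure (Ico (0:ℝ) t) := by
        rw [closure_Ico (ne_of_lt h)]; exact ⟨le_of_lt h, le_refl t⟩
      have hnb : (nhdsWithin t (Ico (0:ℝ) t)).NeBot :=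
        mem_closure_iff_nhdsWithin_neBot.1 hcl
      have htend : Filter.Tendsto (fun u => dist (f u) x₀ - 2 * Cc * u)
          (nhdsWithin t (Ico (0:ℝ) t)) (nhds (dist (f t) x₀ - 2 * Cc * t)) := by
        apply Filter.Tendsto.sub
        · apply Filter.Tendsto.dist _ tendsto_const_nhds
          exact ((hcont t ⟨by linarith, ht2⟩).mono
            (fun u hu => ⟨by linarith [hu.1], le_trans (le_of_lt hu.2) ht2⟩)).tendsto
        · exact (Filter.Tendsto.const_mul _ (tendsto_nhdsWithin_of_tendsto_nhds
            Filter.tendsto_id))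
      have hle : ∀ u ∈ Ico (0:ℝ) t, dist (f u) x₀ - 2 * Cc * u ≤ 0 := fun u hu =>
        sub_nonpos.2 (hts u hu.1 hu.2)
      have := le_of_tendsto htend (eventually_nhdsWithin_of_forall hle)
      linarith
  have hsub : Icc (0:ℝ) 2 ⊆ s := by
    apply IsClosed.Icc_subset_of_forall_exists_gt (hsclosed.inter isClosed_Icc)
    · intro u hu0 hu; linarith
    · rintro t ⟨hts, ht0, ht2⟩ y hy
      have htIcc : t ∈ Icc (0:ℝ) 2 := ⟨ht0, le_of_lt ht2⟩
      have hft : dist (f t) x₀ ≤ 2 * Cc * t := hkey t ⟨hts, htIcc⟩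
      have hft2 : dist (f t) x₀ ≤ 1/2 := by nlinarith
      have hc := (hcont t ⟨by linarith, le_of_lt ht2⟩)
      rw [Metric.continuousWithinAt_iff] at hc
      obtain ⟨δ, hδ0, hδ⟩ := hc (1/2) (by norm_num)
      set T := min (t + δ/2) (min 2 y) with hT
      have htT : t < T := by
        apply lt_min (by linarith) (lt_min ht2 hy)
      have hT2 : T ≤ 2 := le_trans (min_le_right _ _) (min_le_left _ _)
      have hTy : T ≤ y := le_trans (min_le_right _ _) (min_le_right _ _)
      have hTδ : T - t < δ := by
        have : T ≤ t + δ/2 := min_le_left _ _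
        linarith
      have hball : ∀ w ∈ Icc t T, f w ∈ closedBall x₀ 1 := by
        intro w hw
        have hw2 : w ∈ Icc (-1:ℝ) 2 := ⟨by linarith [hw.1], le_trans hw.2 hT2⟩
        have hdw : dist w t < δ := by
          rw [Real.dist_eq, abs_of_nonneg (by linarith [hw.1])]
          linarith [hw.2]
        have := hδ hw2 hdw
        rw [mem_closedBall]
        calc dist (f w) x₀ ≤ dist (f w) (f t) + dist (f t) x₀ := dist_triangle _ _ _
          _ ≤ 1/2 + 1/2 := add_le_add (le_of_lt this) hft2
          _ = 1 := by norm_num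
      have hmvt : ∀ u ∈ Icc t T, ‖f u - f t‖ ≤ Cc * ‖u - t‖ := by
        intro u hu
        exact Convex.norm_image_sub_le_of_norm_hasDerivWithin_le
          (f := f) (f' := fun w => F (f w)) (s := Icc t T)
          (fun w hw => (hfd w ⟨by linarith [hw.1], le_trans hw.2 hT2⟩).mono
            (fun z hz => ⟨by linarith [hz.1, hw.1], by linarith [hz.2, hw.2]⟩))
          (fun w hw => hb (f w) (hball w hw)) (convex_Icc t T)
          (left_mem_Icc.2 (le_of_lt htT)) hu
      refine ⟨T, ?_, htT, hTy⟩
      intro u hu0 huT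
      rcases le_or_gt u t with h | h
      · rcases eq_or_lt_of_le h with h' | h'
        · rw [h']; exact hft
        · exact hts u hu0 h'
      · have huIcc : u ∈ Icc t T := ⟨le_of_lt h, le_of_lt huT⟩
        have h1 := hmvt u huIcc
        rw [Real.norm_eq_abs, abs_of_nonneg (by linarith)] at h1
        calc dist (f u) x₀ ≤ dist (f u) (f t) + dist (f t) x₀ := dist_triangle _ _ _
          _ = ‖f u - f t‖ + dist (f t) x₀ := by rw [dist_eq_norm]
          _ ≤ Cc * (u - t) + 2 * Cc * t := add_le_add h1 hft
          _ ≤ 2 * Cc * u := by nlinarith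
  intro t ht
  exact hkey t ⟨hsub ht, ht⟩

lemma mul3_le {a1 a2 a3 b1 b2 b3 : ℝ} (h1 : a1 ≤ b1) (h2 : a2 ≤ b2) (h3 : a3 ≤ b3)
    (ha2 : 0 ≤ a2) (ha3 : 0 ≤ a3) (hb1 : 0 ≤ b1) (hb2 : 0 ≤ b2) :
    a1 * a2 * a3 ≤ b1 * b2 * b3 :=
  mul_le_mul (mul_le_mul h1 h2 ha2 hb1) h3 ha3 (mul_nonneg hb1 hb2)

lemma bil_bound {E F G : Type*} [NormedAddCommGroup E] [NormedSpace ℝ E]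
    [NormedAddCommGroup F] [NormedSpace ℝ F] [NormedAddCommGroup G] [NormedSpace ℝ G]
    (Tb : E →L[ℝ] F →L[ℝ] G) {b r1 r2 : ℝ} (u : E) (w : F)
    (hT : ‖Tb‖ ≤ b) (h1 : ‖u‖ ≤ r1) (h2 : ‖w‖ ≤ r2) :
    ‖Tb u w‖ ≤ b * r1 * r2 := by
  have hb : (0:ℝ) ≤ b := le_trans (norm_nonneg Tb) hT
  have hr1 : (0:ℝ) ≤ r1 := le_trans (norm_nonneg u) h1
  exact (Tb.le_opNorm₂ u w).trans
    (mul3_le hT h1 h2 (norm_nonneg _) (norm_nonneg _) hb hr1)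

lemma bil_diff {E F G : Type*} [NormedAddCommGroup E] [NormedSpace ℝ E]
    [NormedAddCommGroup F] [NormedSpace ℝ F] [NormedAddCommGroup G] [NormedSpace ℝ G]
    (Tb : E →L[ℝ] F →L[ℝ] G) {b du r1 r2 dw : ℝ} {u u' : E} {w w' : F}
    (hT : ‖Tb‖ ≤ b) (hdu : ‖u - u'‖ ≤ du) (hu' : ‖u'‖ ≤ r1) (hw : ‖w‖ ≤ r2)
    (hdw : ‖w - w'‖ ≤ dw) :
    ‖Tb u w - Tb u' w'‖ ≤ b * du * r2 + b * r1 * dw := by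
  have key : Tb u w - Tb u' w' = Tb (u - u') w + Tb u' (w - w') := by
    simp only [map_sub, ContinuousLinearMap.sub_apply]
    abel
  rw [key]
  refine (norm_add_le _ _).trans (add_le_add ?_ ?_)
  · exact bil_bound Tb _ _ hT hdu hw
  · exact bil_bound Tb _ _ hT hu' hdw

set_option maxHeartbeats 4000000 in
theorem stmt15 (p : ℕ)
    (Γ : EuclideanSpace ℝ (Fin p) →
      EuclideanSpace ℝ (Fin p) →L[ℝ] EuclideanSpace ℝ (Fin p) →L[ℝ] EuclideanSpace ℝ (Fin p))
    (hΓ : ContDiff ℝ 2 Γ)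
    (hΓsymm : ∀ x u v, Γ x u v = Γ x v u)
    (x : EuclideanSpace ℝ (Fin p)) :
    ∃ r > (0:ℝ), ∃ C > (0:ℝ), ∀ v : EuclideanSpace ℝ (Fin p), ‖v‖ < r →
      ∃ γ dγ : ℝ → EuclideanSpace ℝ (Fin p),
        γ 0 = x ∧ dγ 0 = v ∧
        (∀ t ∈ Set.Icc (0:ℝ) 1,
          HasDerivAt γ (dγ t) t ∧ HasDerivAt dγ (-(Γ (γ t) (dγ t) (dγ t))) t) ∧
        ‖γ 1 - (x + v - (1 / 2 : ℝ) • Γ x v v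
            + (1 / 6 : ℝ) • ((2 : ℝ) • Γ x (Γ x v v) v - fderiv ℝ Γ x v v v))‖
          ≤ C * ‖v‖ ^ 4 := by
  classical
  letI : NormedAddCommGroup (EuclideanSpace ℝ (Fin p) →L[ℝ]
      EuclideanSpace ℝ (Fin p) →L[ℝ] EuclideanSpace ℝ (Fin p) →L[ℝ] EuclideanSpace ℝ (Fin p)) :=
    @ContinuousLinearMap.toNormedAddCommGroup ℝ ℝ (EuclideanSpace ℝ (Fin p))
      (EuclideanSpace ℝ (Fin p) →L[ℝ] EuclideanSpace ℝ (Fin p) →L[ℝ] EuclideanSpace ℝ (Fin p))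
      _ _ _ _ _ _ (RingHom.id ℝ) _
  letI : NormedSpace ℝ (EuclideanSpace ℝ (Fin p) →L[ℝ]
      EuclideanSpace ℝ (Fin p) →L[ℝ] EuclideanSpace ℝ (Fin p) →L[ℝ] EuclideanSpace ℝ (Fin p)) :=
    @ContinuousLinearMap.toNormedSpace ℝ ℝ (EuclideanSpace ℝ (Fin p))
      (EuclideanSpace ℝ (Fin p) →L[ℝ] EuclideanSpace ℝ (Fin p) →L[ℝ] EuclideanSpace ℝ (Fin p))
      _ _ _ _ _ _ (RingHom.id ℝ) _ ℝ _ _ _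
  have h12 : (1:WithTop ℕ∞) ≤ 2 := by norm_num
  have hΓ'c : ContDiff ℝ 1 (fderiv ℝ Γ) := hΓ.fderiv_right (m := 1) (by norm_num)
  have hΓd : Differentiable ℝ Γ := hΓ.differentiable two_ne_zero
  have hΓ'd : Differentiable ℝ (fderiv ℝ Γ) := hΓ'c.differentiable one_ne_zero
  set D := Metric.closedBall x 1 with hDdef
  have hDconv : Convex ℝ D := convex_closedBall x 1
  have hxD : x ∈ D := mem_closedBall_self zero_le_one
  obtain ⟨B₀, hB₀⟩ := (isCompact_closedBall x 1).exists_bound_of_continuousOn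
    (f := Γ) (hΓ.continuous.continuousOn)
  obtain ⟨B₁, hB₁⟩ := (isCompact_closedBall x 1).exists_bound_of_continuousOn
    (f := fderiv ℝ Γ) (hΓ'c.continuous.continuousOn)
  obtain ⟨B₂, hB₂⟩ := (isCompact_closedBall x 1).exists_bound_of_continuousOn
    (f := fderiv ℝ (fderiv ℝ Γ)) ((hΓ'c.continuous_fderiv one_ne_zero).continuousOn)
  set B : ℝ := |B₀| + |B₁| + |B₂| + 1 with hBdef
  have hB1 : 1 ≤ B := by
    have := abs_nonneg B₀; have := abs_nonneg B₁; have := abs_nonneg B₂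
    simp only [hBdef]; linarith
  have hB0 : 0 ≤ B := by linarith
  have hBΓ : ∀ y ∈ D, ‖Γ y‖ ≤ B := fun y hy => by
    have h := hB₀ y hy
    have := le_abs_self B₀; have := abs_nonneg B₁; have := abs_nonneg B₂
    simp only [hBdef]; linarith
  have hBΓ' : ∀ y ∈ D, ‖fderiv ℝ Γ y‖ ≤ B := fun y hy => by
    have h := hB₁ y hy
    have := le_abs_self B₁; have := abs_nonneg B₀; have := abs_nonneg B₂
    simp only [hBdef]; linarith
  have hBΓ'' : ∀ y ∈ D, ‖fderiv ℝ (fderiv ℝ Γ) y‖ ≤ B := fun y hy => by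
    have h := hB₂ y hy
    have := le_abs_self B₂; have := abs_nonneg B₀; have := abs_nonneg B₁
    simp only [hBdef]; linarith
  have hLipΓ : ∀ y ∈ D, ‖Γ y - Γ x‖ ≤ B * ‖y - x‖ := fun y hy =>
    hDconv.norm_image_sub_le_of_norm_hasFDerivWithin_le (f := Γ)
      (fun z _ => (hΓd z).hasFDerivAt.hasFDerivWithinAt) hBΓ' hxD hy
  have hLipΓ' : ∀ y ∈ D, ∀ z ∈ D, ‖fderiv ℝ Γ y - fderiv ℝ Γ z‖ ≤ B * ‖y - z‖ :=
    fun y hy z hz =>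
    hDconv.norm_image_sub_le_of_norm_hasFDerivWithin_le
      (fun w _ => (hΓ'd w).hasFDerivAt.hasFDerivWithinAt) hBΓ'' hz hy
  have hTay : ∀ y ∈ D, ‖Γ y - Γ x - fderiv ℝ Γ x (y - x)‖ ≤ B * ‖y - x‖ * ‖y - x‖ := by
    intro y hy
    have hseg : segment ℝ x y ⊆ D := hDconv.segment_subset hxD hy
    have hzx : ∀ z ∈ segment ℝ x y, ‖z - x‖ ≤ ‖y - x‖ := by
      rintro z ⟨a, b, ha, hb, hab, rfl⟩
      have he : a • x + b • y - x = b • (y - x) := by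
        have ha1 : a = 1 - b := by linarith
        rw [ha1]; module
      rw [he, norm_smul, Real.norm_eq_abs, abs_of_nonneg hb]
      have hb1 : b ≤ 1 := by linarith
      nlinarith [norm_nonneg (y - x)]
    have h := taylor2 Γ (fderiv ℝ Γ) x y (B * ‖y - x‖)
      (fun z _ => (hΓd z).hasFDerivAt)
      (fun z hz => by
        have h1 := hLipΓ' z (hseg hz) x hxD
        have h2 := hzx z hz
        nlinarith [norm_nonneg (z - x)])
    simpa [mul_assoc] using h
  set M : ℝ := 2 * (2 + 4 * B) with hMdef
  have hM0 : 0 < M := by simp only [hMdef]; nlinarith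
  have hM8B : 8 * B ≤ M := by simp only [hMdef]; nlinarith
  set E₂ : ℝ := 4 * M * B + 12 * B^2 with hE₂def
  have hE₂0 : 0 ≤ E₂ := by simp only [hE₂def]; nlinarith
  set E₃ : ℝ := 4 * B * M^2 + 28 * B^2 + 4 * B * E₂ + B^3 with hE₃def
  have hE₃0 : 0 ≤ E₃ := by simp only [hE₃def]; nlinarith
  refine ⟨min 1 (1/(4*M)), lt_min one_pos (by positivity), E₃ + 1, by linarith, ?_⟩
  intro v hv
  by_cases hv0 : v = 0
  · subst hv0
    refine ⟨fun _ => x, fun _ => 0, rfl, rfl, fun t _ => ⟨?_, ?_⟩, ?_⟩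
    · simpa using hasDerivAt_const t x
    · have : -(Γ x (0:EuclideanSpace ℝ (Fin p)) 0) = 0 := by simp
      rw [this]; exact hasDerivAt_const t 0
    · simp
  · set c : ℝ := ‖v‖ with hcdef
    have hc : 0 < c := norm_pos_iff.2 hv0
    have hc1 : c ≤ 1 := le_of_lt (lt_of_lt_of_le hv (min_le_left _ _))
    have hcM : M * c ≤ 1/4 := by
      have h := lt_of_lt_of_le hv (min_le_right _ _)
      rw [lt_div_iff₀ (by positivity)] at h
      nlinarith
    have hBc : B * c ≤ 1 := by nlinarith
    set F : (EuclideanSpace ℝ (Fin p) × EuclideanSpace ℝ (Fin p)) →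
        (EuclideanSpace ℝ (Fin p) × EuclideanSpace ℝ (Fin p)) :=
      fun z => (c • z.2, -(c • (Γ z.1 z.2 z.2))) with hFdef
    have hFc : ContDiff ℝ 1 F := by
      apply ContDiff.prodMk
      · exact contDiff_snd.const_smul c
      · exact ((((hΓ.of_le h12).comp contDiff_fst).clm_apply contDiff_snd).clm_apply
          contDiff_snd).const_smul c |>.neg
    set x₀ : EuclideanSpace ℝ (Fin p) × EuclideanSpace ℝ (Fin p) := (x, c⁻¹ • v) with hx₀def
    have hvnorm : ‖c⁻¹ • v‖ = 1 := by
      rw [norm_smul, norm_inv, Real.norm_eq_abs, abs_of_pos hc, ← hcdef]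
      field_simp
    set Cc : ℝ := c * (2 + 4 * B) with hCcdef
    have hCc : 0 < Cc := by simp only [hCcdef]; nlinarith
    have hCcM : 2 * Cc = M * c := by simp only [hCcdef, hMdef]; ring
    have hCc2 : Cc * 2 ≤ 1/4 := by linarith [hcM, hCcM]
    have hFb : ∀ z ∈ closedBall x₀ 1, ‖F z‖ ≤ Cc := by
      intro z hz
      rw [mem_closedBall] at hz
      have h1 : ‖z.1 - x‖ ≤ 1 := by
        rw [← dist_eq_norm]
        calc dist z.1 x ≤ dist z x₀ := by rw [Prod.dist_eq]; exact le_max_left _ _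
          _ ≤ 1 := hz
      have h2 : ‖z.2‖ ≤ 2 := by
        have h3 : dist z.2 (c⁻¹ • v) ≤ 1 := by
          calc dist z.2 (c⁻¹ • v) ≤ dist z x₀ := by rw [Prod.dist_eq]; exact le_max_right _ _
            _ ≤ 1 := hz
        calc ‖z.2‖ ≤ ‖z.2 - c⁻¹ • v‖ + ‖c⁻¹ • v‖ := by
              have := norm_add_le (z.2 - c⁻¹ • v) (c⁻¹ • v); simpa using this
          _ ≤ 1 + 1 := add_le_add (by rwa [← dist_eq_norm]) (le_of_eq hvnorm)
          _ = 2 := by norm_num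
      have hz1D : z.1 ∈ D := by rwa [hDdef, mem_closedBall, dist_eq_norm]
      have hΓb : ‖Γ z.1 z.2 z.2‖ ≤ B * 2 * 2 := bil_bound _ _ _ (hBΓ z.1 hz1D) h2 h2
      rw [Prod.norm_def]
      apply max_le
      · simp only [hFdef]
        rw [norm_smul, Real.norm_eq_abs, abs_of_pos hc]
        simp only [hCcdef]; nlinarith
      · simp only [hFdef]
        rw [norm_neg, norm_smul, Real.norm_eq_abs, abs_of_pos hc]
        simp only [hCcdef]; nlinarith
    obtain ⟨f, hf0, hfd, hfb⟩ := exists_sol F hFc x₀ Cc hCc hFb hCc2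
    set γ : ℝ → EuclideanSpace ℝ (Fin p) := fun t => (f t).1 with hγdef
    set dγ : ℝ → EuclideanSpace ℝ (Fin p) := fun t => c • (f t).2 with hdγdef
    have hγ0 : γ 0 = x := by simp [hγdef, hf0, hx₀def]
    have hdγ0 : dγ 0 = v := by
      simp only [hdγdef, hf0, hx₀def]
      rw [smul_smul, mul_inv_cancel₀ hc.ne', one_smul]
    have hODE : ∀ t ∈ Icc (0:ℝ) 1, HasDerivAt f (F (f t)) t := by
      intro t ht
      exact (hfd t ⟨by linarith [ht.1], by linarith [ht.2]⟩).hasDerivAt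
        (Icc_mem_nhds (by linarith [ht.1]) (by linarith [ht.2]))
    have hOde : ∀ t ∈ Icc (0:ℝ) 1,
        HasDerivAt γ (dγ t) t ∧ HasDerivAt dγ (-(Γ (γ t) (dγ t) (dγ t))) t := by
      intro t ht
      constructor
      · have h := (ContinuousLinearMap.fst ℝ (EuclideanSpace ℝ (Fin p))
          (EuclideanSpace ℝ (Fin p))).hasFDerivAt.comp_hasDerivAt t (hODE t ht)
        exact h
      · have h := ((ContinuousLinearMap.snd ℝ (EuclideanSpace ℝ (Fin p))
          (EuclideanSpace ℝ (Fin p))).hasFDerivAt.comp_hasDerivAt t (hODE t ht)).const_smul c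
        refine h.congr_deriv ?_
        symm
        show -(Γ ((f t).1) (c • (f t).2) (c • (f t).2)) = c • (-(c • (Γ (f t).1 (f t).2 (f t).2)))
        simp [map_smul, smul_smul, smul_neg, ContinuousLinearMap.smul_apply]
    -- basic bounds
    have hdist : ∀ t ∈ Icc (0:ℝ) 1, dist (f t) x₀ ≤ M * c * t := by
      intro t ht
      have h := hfb t ⟨ht.1, by linarith [ht.2]⟩
      calc dist (f t) x₀ ≤ 2 * Cc * t := h
        _ = M * c * t := by rw [hCcM]
    have hγx : ∀ t ∈ Icc (0:ℝ) 1, ‖γ t - x‖ ≤ M * c * t := by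
      intro t ht
      calc ‖γ t - x‖ = dist (f t).1 x := by rw [dist_eq_norm]
        _ ≤ dist (f t) x₀ := by rw [Prod.dist_eq]; exact le_max_left _ _
        _ ≤ M * c * t := hdist t ht
    have hγxMc : ∀ t ∈ Icc (0:ℝ) 1, ‖γ t - x‖ ≤ M * c := by
      intro t ht
      have h1 := hγx t ht
      have h2 : M * c * t ≤ M * c * 1 :=
        mul_le_mul_of_nonneg_left ht.2 (by positivity)
      rw [mul_one] at h2
      linarith
    have hγD : ∀ t ∈ Icc (0:ℝ) 1, γ t ∈ D := by
      intro t ht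
      rw [hDdef, mem_closedBall, dist_eq_norm]
      have := hγxMc t ht
      linarith [hcM]
    have hdγb : ∀ t ∈ Icc (0:ℝ) 1, ‖dγ t‖ ≤ 2 * c := by
      intro t ht
      have h3 : dist (f t).2 (c⁻¹ • v) ≤ 1 := by
        calc dist (f t).2 (c⁻¹ • v) ≤ dist (f t) x₀ := by
              rw [Prod.dist_eq]; exact le_max_right _ _
          _ ≤ M * c * t := hdist t ht
          _ ≤ 1 := by
              have h2 : M * c * t ≤ M * c * 1 :=
                mul_le_mul_of_nonneg_left ht.2 (by positivity)
              rw [mul_one] at h2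
              linarith [hcM]
      have h4 : ‖(f t).2‖ ≤ 2 := by
        calc ‖(f t).2‖ ≤ ‖(f t).2 - c⁻¹ • v‖ + ‖c⁻¹ • v‖ := by
              have := norm_add_le ((f t).2 - c⁻¹ • v) (c⁻¹ • v); simpa using this
          _ ≤ 1 + 1 := add_le_add (by rwa [← dist_eq_norm]) (le_of_eq hvnorm)
          _ = 2 := by norm_num
      calc ‖dγ t‖ = c * ‖(f t).2‖ := by
            rw [hdγdef]; simp [norm_smul, Real.norm_eq_abs, abs_of_pos hc]
        _ ≤ c * 2 := mul_le_mul_of_nonneg_left h4 hc.le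
        _ = 2 * c := by ring
    clear_value γ dγ
    have hvc : ‖v‖ ≤ c := hcdef.ge
    have hc2 : (0:ℝ) ≤ c^2 := pow_nonneg hc.le 2
    have hc3 : (0:ℝ) ≤ c^3 := pow_nonneg hc.le 3
    have h4B2 : (0:ℝ) ≤ 4*B*c^2 := mul_nonneg (by linarith) hc2
    have hna : ‖Γ x v v‖ ≤ B * c^2 := by
      have h := bil_bound (Γ x) v v (hBΓ x hxD) hvc hvc
      calc ‖Γ x v v‖ ≤ B * c * c := h
        _ = B * c^2 := by ring
    -- Step 1
    have hstep1w : ∀ t ∈ Icc (0:ℝ) 1, ‖dγ t - v‖ ≤ 4*B*c^2 := by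
      intro t ht
      have h := mvt01 dγ (fun s => -(Γ (γ s) (dγ s) (dγ s))) (4*B*c^2)
        (fun s hs => (hOde s hs).2)
        (fun s hs => by
          rw [norm_neg]
          have hb := bil_bound (Γ (γ s)) (dγ s) (dγ s) (hBΓ _ (hγD s hs)) (hdγb s hs) (hdγb s hs)
          calc ‖Γ (γ s) (dγ s) (dγ s)‖ ≤ B * (2*c) * (2*c) := hb
            _ = 4*B*c^2 := by ring)
        ht
      rw [hdγ0] at h
      refine le_trans h ?_
      have h2 : 4*B*c^2 * t ≤ 4*B*c^2 * 1 := mul_le_mul_of_nonneg_left ht.2 h4B2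
      rw [mul_one] at h2; exact h2
    have hstep1' : ∀ t ∈ Icc (0:ℝ) 1, ‖γ t - (x + t • v)‖ ≤ 4*B*c^2 := by
      intro t ht
      have hd : ∀ s ∈ Icc (0:ℝ) 1, HasDerivAt (fun s => γ s - s • v) (dγ s - v) s := by
        intro s hs
        exact (hOde s hs).1.sub (by simpa using (hasDerivAt_id s).smul_const v)
      have h := mvt01 _ _ (4*B*c^2) hd hstep1w ht
      have h' : ‖(γ t - t • v) - (γ 0 - (0:ℝ) • v)‖ ≤ 4*B*c^2 * t := h
      rw [hγ0, zero_smul, sub_zero] at h'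
      have he : γ t - (x + t • v) = (γ t - t • v) - x := by abel
      rw [he]
      refine le_trans h' ?_
      have h2 : 4*B*c^2 * t ≤ 4*B*c^2 * 1 := mul_le_mul_of_nonneg_left ht.2 h4B2
      rw [mul_one] at h2; exact h2
    -- Step 2
    have hstep2 : ∀ s ∈ Icc (0:ℝ) 1, ‖Γ (γ s) (dγ s) (dγ s) - Γ x v v‖ ≤ E₂ * c^3 := by
      intro s hs
      have hid : Γ (γ s) (dγ s) (dγ s) - Γ x v v
          = (Γ (γ s) - Γ x) (dγ s) (dγ s) + (Γ x (dγ s) (dγ s) - Γ x v v) := by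
        simp only [ContinuousLinearMap.sub_apply]
        abel
      rw [hid]
      have h1 : ‖(Γ (γ s) - Γ x) (dγ s) (dγ s)‖ ≤ (B*(M*c)) * (2*c) * (2*c) := by
        refine bil_bound _ _ _ ?_ (hdγb s hs) (hdγb s hs)
        refine le_trans (hLipΓ _ (hγD s hs)) ?_
        exact mul_le_mul_of_nonneg_left (hγxMc s hs) hB0
      have h2 : ‖Γ x (dγ s) (dγ s) - Γ x v v‖ ≤ B * (4*B*c^2) * (2*c) + B * c * (4*B*c^2) :=
        bil_diff (Γ x) (hBΓ x hxD) (hstep1w s hs) hvc (hdγb s hs) (hstep1w s hs)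
      refine le_trans (norm_add_le _ _) ?_
      refine le_trans (add_le_add h1 h2) ?_
      refine le_of_eq ?_
      rw [hE₂def]; ring
    -- Step 2'
    have hstep2' : ∀ t ∈ Icc (0:ℝ) 1, ‖dγ t - (v - t • Γ x v v)‖ ≤ E₂ * c^3 := by
      intro t ht
      have hd : ∀ s ∈ Icc (0:ℝ) 1, HasDerivAt (fun s => dγ s + s • Γ x v v)
          (-(Γ (γ s) (dγ s) (dγ s)) + Γ x v v) s := fun s hs =>
        (hOde s hs).2.add (by simpa using (hasDerivAt_id s).smul_const (Γ x v v))
      have hK : ∀ s ∈ Icc (0:ℝ) 1, ‖-(Γ (γ s) (dγ s) (dγ s)) + Γ x v v‖ ≤ E₂ * c^3 := by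
        intro s hs
        have he : -(Γ (γ s) (dγ s) (dγ s)) + Γ x v v
            = -(Γ (γ s) (dγ s) (dγ s) - Γ x v v) := by abel
        rw [he, norm_neg]; exact hstep2 s hs
      have h := mvt01 _ _ (E₂*c^3) hd hK ht
      have h' : ‖(dγ t + t • Γ x v v) - (dγ 0 + (0:ℝ) • Γ x v v)‖ ≤ E₂*c^3 * t := h
      rw [hdγ0, zero_smul, add_zero] at h'
      have he : dγ t - (v - t • Γ x v v) = (dγ t + t • Γ x v v) - v := by abel
      rw [he]
      refine le_trans h' ?_
      have hE : (0:ℝ) ≤ E₂*c^3 := mul_nonneg hE₂0 hc3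
      have h2 : E₂*c^3 * t ≤ E₂*c^3 * 1 := mul_le_mul_of_nonneg_left ht.2 hE
      rw [mul_one] at h2; exact h2
    -- Step 3
    have hstep3 : ∀ s ∈ Icc (0:ℝ) 1,
        ‖Γ (γ s) (dγ s) (dγ s) - (Γ x v v + s • (fderiv ℝ Γ x v v v)
          - (2*s) • (Γ x (Γ x v v) v))‖ ≤ E₃ * c^4 := by
      intro s hs
      have hs0 := hs.1
      have hs1 := hs.2
      have hgD := hγD s hs
      have hgx : ‖γ s - x‖ ≤ M * c := hγxMc s hs
      have hw2 : ‖dγ s‖ ≤ 2*c := hdγb s hs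
      have hwv : ‖dγ s - v‖ ≤ 4*B*c^2 := hstep1w s hs
      have hρ : ‖γ s - x - s • v‖ ≤ 4*B*c^2 := by
        have h := hstep1' s hs
        have he : γ s - x - s • v = γ s - (x + s • v) := by abel
        rw [he]; exact h
      have hsv : ‖s • v‖ ≤ c := by
        rw [norm_smul, Real.norm_eq_abs, abs_of_nonneg hs0]
        calc s * ‖v‖ ≤ 1 * c := mul_le_mul hs1 hvc (norm_nonneg v) zero_le_one
          _ = c := one_mul c
      have hMc0 : (0:ℝ) ≤ M * c := mul_nonneg hM0.le hc.le
      have hT1 : ‖Γ (γ s) (dγ s) (dγ s) - (Γ x (dγ s) (dγ s)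
          + (fderiv ℝ Γ x (γ s - x)) (dγ s) (dγ s))‖
          ≤ (B*(M*c)*(M*c)) * (2*c) * (2*c) := by
        have hid : Γ (γ s) (dγ s) (dγ s) - (Γ x (dγ s) (dγ s)
            + (fderiv ℝ Γ x (γ s - x)) (dγ s) (dγ s))
            = (Γ (γ s) - Γ x - fderiv ℝ Γ x (γ s - x)) (dγ s) (dγ s) := by
          simp only [ContinuousLinearMap.sub_apply]
          abel
        rw [hid]
        refine bil_bound _ _ _ ?_ hw2 hw2
        refine le_trans (hTay (γ s) hgD) ?_
        exact mul3_le (le_refl B) hgx hgx (norm_nonneg _) (norm_nonneg _) hB0 hMc0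
      have hT2 : ‖(fderiv ℝ Γ x (γ s - x)) (dγ s) (dγ s) - s • (fderiv ℝ Γ x v v v)‖
          ≤ (B*(4*B*c^2))*(2*c)*(2*c) + ((B*c)*(4*B*c^2)*(2*c) + (B*c)*c*(4*B*c^2)) := by
        have h1 : (fderiv ℝ Γ x (s • v)) v v = s • (fderiv ℝ Γ x v v v) := by
          simp [map_smul, ContinuousLinearMap.smul_apply]
        have hid : (fderiv ℝ Γ x (γ s - x)) (dγ s) (dγ s) - s • (fderiv ℝ Γ x v v v)
            = (fderiv ℝ Γ x (γ s - x - s • v)) (dγ s) (dγ s)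
              + ((fderiv ℝ Γ x (s • v)) (dγ s) (dγ s) - (fderiv ℝ Γ x (s • v)) v v) := by
          rw [← h1]
          simp only [map_sub, ContinuousLinearMap.sub_apply]
          abel
        rw [hid]
        refine (norm_add_le _ _).trans (add_le_add ?_ ?_)
        · refine bil_bound _ _ _ ?_ hw2 hw2
          refine le_trans (@ContinuousLinearMap.le_opNorm ℝ ℝ (EuclideanSpace ℝ (Fin p))
            (EuclideanSpace ℝ (Fin p) →L[ℝ] EuclideanSpace ℝ (Fin p) →L[ℝ] EuclideanSpace ℝ (Fin p))
            _ _ _ _ _ _ (RingHom.id ℝ) _ (fderiv ℝ Γ x) _) ?_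
          exact mul_le_mul (hBΓ' x hxD) hρ (norm_nonneg _) hB0
        · refine bil_diff _ ?_ hwv hvc hw2 hwv
          refine le_trans (@ContinuousLinearMap.le_opNorm ℝ ℝ (EuclideanSpace ℝ (Fin p))
            (EuclideanSpace ℝ (Fin p) →L[ℝ] EuclideanSpace ℝ (Fin p) →L[ℝ] EuclideanSpace ℝ (Fin p))
            _ _ _ _ _ _ (RingHom.id ℝ) _ (fderiv ℝ Γ x) _) ?_
          exact mul_le_mul (hBΓ' x hxD) hsv (norm_nonneg _) hB0
      have hw0 : ‖v - s • Γ x v v‖ ≤ 2*c := by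
        refine le_trans (norm_sub_le _ _) ?_
        have h1 : ‖s • Γ x v v‖ ≤ B * c^2 := by
          rw [norm_smul, Real.norm_eq_abs, abs_of_nonneg hs0]
          calc s * ‖Γ x v v‖ ≤ 1 * (B*c^2) := mul_le_mul hs1 hna (norm_nonneg _) zero_le_one
            _ = B*c^2 := one_mul _
        have h2 : B * c^2 ≤ c := by nlinarith
        linarith
      have hwdiff : ‖dγ s - (v - s • Γ x v v)‖ ≤ E₂ * c^3 := hstep2' s hs
      have hT3a : ‖Γ x (dγ s) (dγ s) - Γ x (v - s • Γ x v v) (v - s • Γ x v v)‖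
          ≤ B*(E₂*c^3)*(2*c) + B*(2*c)*(E₂*c^3) :=
        bil_diff (Γ x) (hBΓ x hxD) hwdiff hw0 hw2 hwdiff
      have hexp : Γ x (v - s • Γ x v v) (v - s • Γ x v v)
          = Γ x v v - (2*s) • (Γ x (Γ x v v) v) + (s*s) • (Γ x (Γ x v v) (Γ x v v)) := by
        have hsym := hΓsymm x v (Γ x v v)
        simp only [map_sub, map_smul, ContinuousLinearMap.sub_apply,
          ContinuousLinearMap.smul_apply, smul_sub, smul_smul]
        rw [hsym]
        module
      have hT3b : ‖Γ x (v - s • Γ x v v) (v - s • Γ x v v)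
          - (Γ x v v - (2*s) • (Γ x (Γ x v v) v))‖ ≤ B*(B*c^2)*(B*c^2) := by
        rw [hexp]
        have he : Γ x v v - (2*s) • (Γ x (Γ x v v) v) + (s*s) • (Γ x (Γ x v v) (Γ x v v))
            - (Γ x v v - (2*s) • (Γ x (Γ x v v) v)) = (s*s) • (Γ x (Γ x v v) (Γ x v v)) := by
          abel
        rw [he, norm_smul, Real.norm_eq_abs, abs_of_nonneg (mul_nonneg hs0 hs0)]
        have h1 : ‖Γ x (Γ x v v) (Γ x v v)‖ ≤ B*(B*c^2)*(B*c^2) :=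
          bil_bound _ _ _ (hBΓ x hxD) hna hna
        have hss : s*s ≤ 1 := by nlinarith
        calc s*s*‖Γ x (Γ x v v) (Γ x v v)‖ ≤ 1 * (B*(B*c^2)*(B*c^2)) :=
              mul_le_mul hss h1 (norm_nonneg _) zero_le_one
          _ = _ := one_mul _
      have hsplit : Γ (γ s) (dγ s) (dγ s) - (Γ x v v + s • (fderiv ℝ Γ x v v v)
            - (2*s) • (Γ x (Γ x v v) v))
          = (Γ (γ s) (dγ s) (dγ s) - (Γ x (dγ s) (dγ s)
              + (fderiv ℝ Γ x (γ s - x)) (dγ s) (dγ s)))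
            + ((fderiv ℝ Γ x (γ s - x)) (dγ s) (dγ s) - s • (fderiv ℝ Γ x v v v))
            + ((Γ x (dγ s) (dγ s) - Γ x (v - s • Γ x v v) (v - s • Γ x v v))
              + (Γ x (v - s • Γ x v v) (v - s • Γ x v v)
                - (Γ x v v - (2*s) • (Γ x (Γ x v v) v)))) := by
        abel
      rw [hsplit]
      calc ‖_ + _ + _‖ ≤ ‖_ + _‖ + ‖_‖ := norm_add_le _ _
        _ ≤ (‖_‖ + ‖_‖) + (‖_‖ + ‖_‖) := add_le_add (norm_add_le _ _) (norm_add_le _ _)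
        _ ≤ ((B*(M*c)*(M*c)) * (2*c) * (2*c)
              + ((B*(4*B*c^2))*(2*c)*(2*c) + ((B*c)*(4*B*c^2)*(2*c) + (B*c)*c*(4*B*c^2))))
            + ((B*(E₂*c^3)*(2*c) + B*(2*c)*(E₂*c^3)) + B*(B*c^2)*(B*c^2)) :=
              add_le_add (add_le_add hT1 hT2) (add_le_add hT3a hT3b)
        _ = E₃ * c^4 := by rw [hE₃def]; ring
    -- Final: two integrations
    have hdg1 : ∀ s ∈ Icc (0:ℝ) 1, HasDerivAt
        (fun s => dγ s + s • Γ x v v + (s^2/2) • (fderiv ℝ Γ x v v v)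
          - (s^2) • (Γ x (Γ x v v) v))
        (-(Γ (γ s) (dγ s) (dγ s)) + Γ x v v + s • (fderiv ℝ Γ x v v v)
          - (2*s) • (Γ x (Γ x v v) v)) s := by
      intro s hs
      have h1 := (hOde s hs).2
      have h2 : HasDerivAt (fun s : ℝ => s • Γ x v v) (Γ x v v) s := by
        simpa using (hasDerivAt_id s).smul_const (Γ x v v)
      have h3 : HasDerivAt (fun s : ℝ => (s^2/2) • (fderiv ℝ Γ x v v v))
          (s • (fderiv ℝ Γ x v v v)) s := by
        have h := ((hasDerivAt_pow 2 s).div_const 2).smul_const (fderiv ℝ Γ x v v v)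
        refine h.congr_deriv ?_
        congr 1
        push_cast; ring
      have h4 : HasDerivAt (fun s : ℝ => (s^2) • (Γ x (Γ x v v) v))
          ((2*s) • (Γ x (Γ x v v) v)) s := by
        have h := (hasDerivAt_pow 2 s).smul_const (Γ x (Γ x v v) v)
        refine h.congr_deriv ?_
        congr 1
        push_cast; ring
      exact ((h1.add h2).add h3).sub h4
    have hKg1 : ∀ s ∈ Icc (0:ℝ) 1, ‖-(Γ (γ s) (dγ s) (dγ s)) + Γ x v v
        + s • (fderiv ℝ Γ x v v v) - (2*s) • (Γ x (Γ x v v) v)‖ ≤ E₃ * c^4 := by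
      intro s hs
      have he : -(Γ (γ s) (dγ s) (dγ s)) + Γ x v v + s • (fderiv ℝ Γ x v v v)
          - (2*s) • (Γ x (Γ x v v) v)
          = -(Γ (γ s) (dγ s) (dγ s) - (Γ x v v + s • (fderiv ℝ Γ x v v v)
            - (2*s) • (Γ x (Γ x v v) v))) := by abel
      rw [he, norm_neg]
      exact hstep3 s hs
    have hE₃c : (0:ℝ) ≤ E₃ * c^4 := mul_nonneg hE₃0 (pow_nonneg hc.le 4)
    have hg1 : ∀ t ∈ Icc (0:ℝ) 1, ‖(dγ t + t • Γ x v v + (t^2/2) • (fderiv ℝ Γ x v v v)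
        - (t^2) • (Γ x (Γ x v v) v)) - v‖ ≤ E₃ * c^4 := by
      intro t ht
      have h := mvt01 _ _ (E₃*c^4) hdg1 hKg1 ht
      have h' : ‖(dγ t + t • Γ x v v + (t^2/2) • (fderiv ℝ Γ x v v v)
          - (t^2) • (Γ x (Γ x v v) v))
          - (dγ 0 + (0:ℝ) • Γ x v v + ((0:ℝ)^2/2) • (fderiv ℝ Γ x v v v)
          - ((0:ℝ)^2) • (Γ x (Γ x v v) v))‖ ≤ E₃*c^4 * t := h
      have he0 : dγ 0 + (0:ℝ) • Γ x v v + ((0:ℝ)^2/2) • (fderiv ℝ Γ x v v v)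
          - ((0:ℝ)^2) • (Γ x (Γ x v v) v) = v := by
        rw [hdγ0]; simp
      rw [he0] at h'
      refine le_trans h' ?_
      have h2 : E₃*c^4 * t ≤ E₃*c^4 * 1 := mul_le_mul_of_nonneg_left ht.2 hE₃c
      rw [mul_one] at h2; exact h2
    have hdg2 : ∀ s ∈ Icc (0:ℝ) 1, HasDerivAt
        (fun s => γ s - s • v + (s^2/2) • Γ x v v + (s^3/6) • (fderiv ℝ Γ x v v v)
          - (s^3/3) • (Γ x (Γ x v v) v))
        (dγ s - v + s • Γ x v v + (s^2/2) • (fderiv ℝ Γ x v v v)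
          - (s^2) • (Γ x (Γ x v v) v)) s := by
      intro s hs
      have h1 := (hOde s hs).1
      have h2 : HasDerivAt (fun s : ℝ => s • v) v s := by
        simpa using (hasDerivAt_id s).smul_const v
      have h3 : HasDerivAt (fun s : ℝ => (s^2/2) • Γ x v v) (s • Γ x v v) s := by
        have h := ((hasDerivAt_pow 2 s).div_const 2).smul_const (Γ x v v)
        refine h.congr_deriv ?_
        congr 1
        push_cast; ring
      have h4 : HasDerivAt (fun s : ℝ => (s^3/6) • (fderiv ℝ Γ x v v v))
          ((s^2/2) • (fderiv ℝ Γ x v v v)) s := by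
        have h := ((hasDerivAt_pow 3 s).div_const 6).smul_const (fderiv ℝ Γ x v v v)
        refine h.congr_deriv ?_
        congr 1
        push_cast; ring
      have h5 : HasDerivAt (fun s : ℝ => (s^3/3) • (Γ x (Γ x v v) v))
          ((s^2) • (Γ x (Γ x v v) v)) s := by
        have h := ((hasDerivAt_pow 3 s).div_const 3).smul_const (Γ x (Γ x v v) v)
        refine h.congr_deriv ?_
        congr 1
        push_cast; ring
      exact (((h1.sub h2).add h3).add h4).sub h5
    have hKg2 : ∀ s ∈ Icc (0:ℝ) 1, ‖dγ s - v + s • Γ x v v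
        + (s^2/2) • (fderiv ℝ Γ x v v v) - (s^2) • (Γ x (Γ x v v) v)‖ ≤ E₃ * c^4 := by
      intro s hs
      have he : dγ s - v + s • Γ x v v + (s^2/2) • (fderiv ℝ Γ x v v v)
          - (s^2) • (Γ x (Γ x v v) v)
          = (dγ s + s • Γ x v v + (s^2/2) • (fderiv ℝ Γ x v v v)
            - (s^2) • (Γ x (Γ x v v) v)) - v := by abel
      rw [he]
      exact hg1 s hs
    have hfin := mvt01 _ _ (E₃*c^4) hdg2 hKg2 (right_mem_Icc.2 zero_le_one)
    have hfin' : ‖(γ 1 - (1:ℝ) • v + ((1:ℝ)^2/2) • Γ x v v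
        + ((1:ℝ)^3/6) • (fderiv ℝ Γ x v v v) - ((1:ℝ)^3/3) • (Γ x (Γ x v v) v))
        - (γ 0 - (0:ℝ) • v + ((0:ℝ)^2/2) • Γ x v v
        + ((0:ℝ)^3/6) • (fderiv ℝ Γ x v v v) - ((0:ℝ)^3/3) • (Γ x (Γ x v v) v))‖
        ≤ E₃*c^4 * 1 := hfin
    rw [mul_one] at hfin'
    refine ⟨γ, dγ, hγ0, hdγ0, hOde, ?_⟩
    have he2 : (γ 1 - (1:ℝ) • v + ((1:ℝ)^2/2) • Γ x v v
        + ((1:ℝ)^3/6) • (fderiv ℝ Γ x v v v) - ((1:ℝ)^3/3) • (Γ x (Γ x v v) v))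
        - (γ 0 - (0:ℝ) • v + ((0:ℝ)^2/2) • Γ x v v
        + ((0:ℝ)^3/6) • (fderiv ℝ Γ x v v v) - ((0:ℝ)^3/3) • (Γ x (Γ x v v) v))
        = γ 1 - (x + v - (1 / 2 : ℝ) • Γ x v v
            + (1 / 6 : ℝ) • ((2 : ℝ) • Γ x (Γ x v v) v - fderiv ℝ Γ x v v v)) := by
      rw [hγ0]
      norm_num
      module
    rw [he2] at hfin'
    refine le_trans hfin' ?_
    have h4 : (0:ℝ) ≤ c^4 := pow_nonneg hc.le 4
    nlinarith [h4]
end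

section
/- Let v ∈ ℝ³ be nonzero, a ∈ ℝ³, γ > 0, and write elements of ℝ⁹ as ζ = (ζ_p, ζ_v, ζ_a) with blocks in ℝ³. Define the bilinear map Γ : ℝ⁹ ⊗ ℝ⁹ → ℝ⁹ by Γ(ζ ⊗ ς) := S(ζ ⊗ ς)v/(2‖v‖²), where S(ζ ⊗ ς) is the 9×3 block matrix with blocks (0₃; ζ_a ς_aᵀ + ς_a ζ_aᵀ; −ζ_v ς_aᵀ − ς_v ζ_aᵀ). Let σ ∈ M₉(ℝ) be the block-diagonal matrix diag(0₃, 0₃, γ·P(v)). Then the contraction of Γ with σσᵀ vanishes: Σⱼ₌₁⁹ Γ((σeⱼ) ⊗ (σeⱼ)) = 0 ∈ ℝ⁹, where e₁, …, e₉ is the standard basis of ℝ⁹. -/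
/-- `ℝ⁹` indexed by `(i, b) : Fin 3 × Fin 3`, where `b` is the block index
(`b = 0` the `p`-block, `b = 1` the `v`-block, `b = 2` the `a`-block);
`blk b ζ` extracts the `ℝ³` block `b` of `ζ`. -/
def blk (b : Fin 3) (ζ : Fin 3 × Fin 3 → ℝ) : Fin 3 → ℝ := fun i => ζ (i, b)

/-- The 9×3 block matrix `S(ζ ⊗ ς)` with blocks
`(0₃; ζ_a ς_aᵀ + ς_a ζ_aᵀ; −ζ_v ς_aᵀ − ς_v ζ_aᵀ)`. -/
noncomputable def Smat (ζ ς : Fin 3 × Fin 3 → ℝ) : Matrix (Fin 3 × Fin 3) (Fin 3) ℝ :=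
  fun ib j =>
    if ib.2 = 1 then
      (Matrix.vecMulVec (blk 2 ζ) (blk 2 ς) + Matrix.vecMulVec (blk 2 ς) (blk 2 ζ)) ib.1 j
    else if ib.2 = 2 then
      -(Matrix.vecMulVec (blk 1 ζ) (blk 2 ς) + Matrix.vecMulVec (blk 1 ς) (blk 2 ζ)) ib.1 j
    else 0

lemma normsq_eq (v : EuclideanSpace ℝ (Fin 3)) : ‖v‖ ^ 2 = ∑ i, v i ^ 2 := by
  rw [EuclideanSpace.norm_eq, Real.sq_sqrt (by positivity)]
  simp [sq_abs]

/-- `vᵀ P(v) = 0`. -/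
lemma key (v : EuclideanSpace ℝ (Fin 3)) (hv : v ≠ 0) (k : Fin 3) :
    ∑ i, projMat v i k * v i = 0 := by
  have hn : ‖v‖ ^ 2 ≠ 0 := pow_ne_zero 2 (norm_ne_zero_iff.mpr hv)
  simp only [projMat, Matrix.sub_apply, Matrix.one_apply, Matrix.smul_apply,
    Matrix.vecMulVec_apply, smul_eq_mul, sub_mul, Finset.sum_sub_distrib, ite_mul, one_mul, zero_mul]
  rw [Finset.sum_ite_eq' Finset.univ k (fun i => v i)]
  have : ∑ i, (‖v‖ ^ 2)⁻¹ * (v i * v k) * v i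
      = (‖v‖ ^ 2)⁻¹ * (∑ i, v i ^ 2) * v k := by
    simp only [Finset.mul_sum, Finset.sum_mul]
    apply Finset.sum_congr rfl; intro i _; ring
  rw [this, ← normsq_eq, inv_mul_cancel₀ hn]
  simp

theorem stmt17 (v : EuclideanSpace ℝ (Fin 3)) (hv : v ≠ 0)
    (a : EuclideanSpace ℝ (Fin 3)) (γ : ℝ) (hγ : 0 < γ) :
    -- the local connector `Γ(ζ ⊗ ς) = S(ζ ⊗ ς) v / (2‖v‖²)`
    let Γ : (Fin 3 × Fin 3 → ℝ) → (Fin 3 × Fin 3 → ℝ) → Fin 3 × Fin 3 → ℝ :=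
      fun ζ ς => (2 * ‖v‖ ^ 2)⁻¹ • (Smat ζ ς).mulVec v
    -- the diffusion coefficient `σ = diag(0₃, 0₃, γ P(v))`
    let σ : Matrix (Fin 3 × Fin 3) (Fin 3 × Fin 3) ℝ :=
      Matrix.blockDiagonal ![0, 0, γ • projMat v]
    -- contraction of `Γ` with `σ σᵀ` over the standard basis of `ℝ⁹` vanishes
    ∑ j : Fin 3 × Fin 3, Γ (σ.mulVec (Pi.single j 1)) (σ.mulVec (Pi.single j 1)) = 0 := by
  intro Γ σ
  apply Finset.sum_eq_zero
  intro j _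
  set ζ : Fin 3 × Fin 3 → ℝ := σ.mulVec (Pi.single j 1) with hζ
  have hζval : ∀ ib : Fin 3 × Fin 3, ζ ib = σ ib j := by
    intro ib
    simp [hζ, Matrix.mulVec_single]
  -- the v-block of ζ vanishes
  have hblk1 : blk 1 ζ = 0 := by
    funext i
    rw [blk, hζval]
    simp only [σ, Matrix.blockDiagonal_apply]
    rcases eq_or_ne (1 : Fin 3) j.2 with h | h
    · simp [← h, Matrix.cons_val_one]
    · simp [h]
  -- the a-block of ζ contracted with v vanishes
  have hblk2 : ∑ k, blk 2 ζ k * v k = 0 := by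
    have : ∀ k, blk 2 ζ k = if (2 : Fin 3) = j.2 then γ * projMat v k j.1 else 0 := by
      intro k
      rw [blk, hζval]
      simp only [σ, Matrix.blockDiagonal_apply]
      rcases eq_or_ne (2 : Fin 3) j.2 with h | h
      · simp [← h]
      · simp [h]
    simp only [this]
    rcases eq_or_ne (2 : Fin 3) j.2 with h | h
    · simp only [if_pos h, mul_assoc, ← Finset.mul_sum]
      rw [key v hv j.1, mul_zero]
    · simp [h]
  -- now each component of Γ ζ ζ vanishes
  funext ib
  simp only [Γ, Pi.smul_apply, smul_eq_mul, Matrix.mulVec, dotProduct, Pi.zero_apply]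
  rw [show (0:ℝ) = (2 * ‖v‖ ^ 2)⁻¹ * 0 by ring]
  congr 1
  by_cases h1 : ib.2 = 1
  · simp only [Smat, if_pos h1, Matrix.add_apply, Matrix.vecMulVec_apply]
    calc ∑ k, (blk 2 ζ ib.1 * blk 2 ζ k + blk 2 ζ ib.1 * blk 2 ζ k) * v k
        = ∑ k, (2 * blk 2 ζ ib.1) * (blk 2 ζ k * v k) := by
          apply Finset.sum_congr rfl; intro k _; ring
      _ = (2 * blk 2 ζ ib.1) * ∑ k, blk 2 ζ k * v k := by rw [Finset.mul_sum]
      _ = 0 := by rw [hblk2, mul_zero]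
  · by_cases h2 : ib.2 = 2
    · simp [Smat, h1, h2, hblk1, Matrix.vecMulVec_apply]
    · simp [Smat, h1, h2]
end
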